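/- Fix N ≥ 1 and work in the polynomial ring ℚ[x_1,...,x_N]. For every n ≥ 1: Σ_{p ∈ park(n)} Π_{i=1}^{n} c_i(p)! · h_{c_i(p)} = n! · Σ_{μ ⊢ n} ((n)_{ℓ(μ)−1} / m(μ)!) · h_μ, where the right-hand sum ranges over integer partitions μ of n. (The right-hand side is n! times the parking function symmetric function PF_n, the Frobenius characteristic of Haiman's parking function module; the left-hand side is n! times the volume polynomial V_n evaluated at umbrae θ̄_i with moments θ̄^i ≃ i!·h_i.) -/

import Mathlib

/-- The parking condition. -/
def IsParking {n : ℕ} (p : Fin n → ℕ) : Prop :=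
  ∀ j ∈ Finset.Icc 1 n, j ≤ (Finset.univ.filter fun i => p i ≤ j).card

instance {n : ℕ} : DecidablePred (IsParking (n := n)) := fun _ =>
  Finset.decidableDforallFinset

/-- `park(n)`: the set of all parking functions of length `n`. -/
def parkFinset (n : ℕ) : Finset (Fin n → ℕ) :=
  (Fintype.piFinset fun _ => Finset.Icc 1 n).filter IsParking

/-- The content `c_i(p)`: the number of indices `j` with `p j = i`. -/
def content {n : ℕ} (p : Fin n → ℕ) (i : ℕ) : ℕ :=
  (Finset.univ.filter fun j => p j = i).card

/-- `m(μ)! = m_1!·m_2!⋯` where `m_i` is the multiplicity of `i` in `μ`. -/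
def multFact (μ : Multiset ℕ) : ℕ := ∏ i ∈ μ.toFinset, (μ.count i).factorial

open Finset

section Core
variable {V : Type*} [DecidableEq V]

/-- The multiset of values of a tuple. -/
def vals {k : ℕ} (f : Fin k → V) : Multiset V := Multiset.map f Finset.univ.val

/-- Tuples realizing a given multiset of values. -/
def arrangements (k : ℕ) (M : Multiset V) : Finset (Fin k → V) :=
  (Fintype.piFinset fun _ : Fin k => M.toFinset).filter fun f => vals f = M

lemma vals_cons {k : ℕ} (f : Fin (k + 1) → V) :
    vals f = f 0 ::ₘ vals (f ∘ Fin.succ) := by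
  unfold vals
  rw [Fin.univ_succ, Finset.cons_val, Multiset.map_cons, Finset.map_val, Multiset.map_map]
  rfl

lemma prod_count_erase {M : Multiset V} {v : V} (hv : v ∈ M) :
    (∏ w ∈ M.toFinset, (M.count w).factorial) =
      M.count v * ∏ w ∈ (M.erase v).toFinset, ((M.erase v).count w).factorial := by
  have hv' : v ∈ M.toFinset := Multiset.mem_toFinset.mpr hv
  have hsub : (M.erase v).toFinset ⊆ M.toFinset := by
    intro w hw
    exact Multiset.mem_toFinset.mpr (Multiset.mem_of_mem_erase (Multiset.mem_toFinset.mp hw))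
  have h1 : ∏ w ∈ (M.erase v).toFinset, ((M.erase v).count w).factorial =
      ∏ w ∈ M.toFinset, ((M.erase v).count w).factorial := by
    refine Finset.prod_subset hsub ?_
    intro w _ hw
    have : (M.erase v).count w = 0 :=
      Multiset.count_eq_zero.mpr (fun h => hw (Multiset.mem_toFinset.mpr h))
    rw [this]
    rfl
  rw [h1, ← Finset.mul_prod_erase _ _ hv', ← Finset.mul_prod_erase _ _ hv', ← mul_assoc]
  have hc : 0 < M.count v := Multiset.count_pos.mpr hv
  have h2 : M.count v * ((M.erase v).count v).factorial = (M.count v).factorial := by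
    rw [Multiset.count_erase_self]
    exact Nat.mul_factorial_pred hc.ne'
  rw [h2]
  congr 1
  refine Finset.prod_congr rfl ?_
  intro w hw
  rw [Multiset.count_erase_of_ne (Finset.ne_of_mem_erase hw)]

theorem core_count : ∀ (k : ℕ) (M : Multiset V), Multiset.card M = k →
    (arrangements k M).card * ∏ v ∈ M.toFinset, (M.count v).factorial = k.factorial := by
  intro k
  induction k with
  | zero =>
    intro M hM
    have hM0 : M = 0 := Multiset.card_eq_zero.mp hM
    subst hM0
    have : arrangements 0 (0 : Multiset V) =
        Fintype.piFinset fun _ : Fin 0 => (0 : Multiset V).toFinset := by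
      apply Finset.filter_true_of_mem
      intro f _
      have : Multiset.card (vals f) = 0 := by
        simp [vals]
      exact Multiset.card_eq_zero.mp this
    rw [this]
    simp
  | succ k ih =>
    intro M hM
    have hfib : (arrangements (k+1) M).card =
        ∑ v ∈ M.toFinset, ((arrangements (k+1) M).filter (fun f => f 0 = v)).card := by
      apply Finset.card_eq_sum_card_fiberwise
      intro f hf
      rw [Finset.mem_coe, arrangements, Finset.mem_filter, Fintype.mem_piFinset] at hf
      exact hf.1 0
    have hstep : ∀ v ∈ M.toFinset,
        ((arrangements (k+1) M).filter (fun f => f 0 = v)).card =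
          (arrangements k (M.erase v)).card := by
      intro v hv
      apply Finset.card_nbij' (i := fun f => f ∘ Fin.succ) (j := fun g => Fin.cases v g)
      · intro f hf
        simp only [Finset.mem_coe, arrangements, Finset.mem_filter, Fintype.mem_piFinset] at hf ⊢
        obtain ⟨⟨hmem, hvals⟩, h0⟩ := hf
        have hv' : vals (f ∘ Fin.succ) = M.erase v := by
          rw [← hvals, vals_cons f, h0, Multiset.erase_cons_head]
        refine ⟨fun j => ?_, hv'⟩
        rw [← hv']
        exact Multiset.mem_toFinset.mpr (Multiset.mem_map_of_mem _ (Finset.mem_univ_val _))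
      · intro g hg
        simp only [Finset.mem_coe, arrangements, Finset.mem_filter, Fintype.mem_piFinset] at hg ⊢
        obtain ⟨hmem, hvals⟩ := hg
        have hcomp : (Fin.cases v g : Fin (k+1) → V) ∘ Fin.succ = g := by
          funext j; simp
        refine ⟨⟨fun j => ?_, ?_⟩, ?_⟩
        · induction j using Fin.cases with
          | zero => simpa using hv
          | succ j =>
            simp only [Fin.cases_succ]
            exact Multiset.mem_toFinset.mpr
              (Multiset.mem_of_mem_erase (Multiset.mem_toFinset.mp (hmem j)))
        · rw [vals_cons, hcomp, hvals]
          simp [Multiset.cons_erase (Multiset.mem_toFinset.mp hv)]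
        · simp
      · intro f hf
        simp only [Finset.mem_coe, arrangements, Finset.mem_filter] at hf
        funext j
        induction j using Fin.cases with
        | zero => simp [hf.2]
        | succ j => simp
      · intro g _
        funext j; simp
    rw [hfib, Finset.sum_congr rfl hstep, Finset.sum_mul]
    have hterm : ∀ v ∈ M.toFinset,
        (arrangements k (M.erase v)).card * ∏ w ∈ M.toFinset, (M.count w).factorial =
          M.count v * k.factorial := by
      intro v hv
      rw [prod_count_erase (Multiset.mem_toFinset.mp hv), ← mul_assoc,
        mul_comm (arrangements k (M.erase v)).card, mul_assoc,
        ih (M.erase v) (by rw [Multiset.card_erase_of_mem (Multiset.mem_toFinset.mp hv), hM]; rfl)]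
    rw [Finset.sum_congr rfl hterm, ← Finset.sum_mul, Multiset.toFinset_sum_count_eq, hM,
      Nat.factorial_succ]

end Core

section Cycle

/-- periodic extension of `c` -/
def Cc (n : ℕ) (c : Fin (n+1) → ℕ) (i : ℕ) : ℕ := c ⟨i % (n+1), Nat.mod_lt _ n.succ_pos⟩

/-- prefix sums -/
def Tc (n : ℕ) (c : Fin (n+1) → ℕ) (j : ℕ) : ℕ := ∑ i ∈ Finset.range j, Cc n c i

/-- the parking/ballot condition at shift `r` -/
def GN (n : ℕ) (c : Fin (n+1) → ℕ) (r : ℕ) : Prop :=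
  ∀ j ≤ n, Tc n c r + j ≤ Tc n c (r + j)

/-- the parking/ballot condition -/
def GoodC (n : ℕ) (c : Fin (n+1) → ℕ) : Prop := ∀ j ≤ n, j ≤ Tc n c j

instance (n : ℕ) : DecidablePred (GoodC n) := fun _ => Nat.decidableBallLE _ _

variable {n : ℕ}

lemma Cc_add (c : Fin (n+1) → ℕ) (j : ℕ) : Cc n c (j + (n+1)) = Cc n c j := by
  simp [Cc, Nat.add_mod_right]

lemma Tc_succ (c : Fin (n+1) → ℕ) (j : ℕ) : Tc n c (j+1) = Tc n c j + Cc n c j :=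
  Finset.sum_range_succ _ _

lemma Tc_period (c : Fin (n+1) → ℕ) (j : ℕ) :
    Tc n c (j + (n+1)) = Tc n c j + Tc n c (n+1) := by
  induction j with
  | zero => simp [Tc]
  | succ j ih =>
    have h1 : Tc n c (j + 1 + (n+1)) = Tc n c (j + (n+1)) + Cc n c (j + (n+1)) := by
      rw [show j + 1 + (n+1) = (j + (n+1)) + 1 by omega]
      exact Tc_succ c _
    have h2 := Tc_succ c j
    rw [h1, ih, Cc_add]
    omega

lemma Tc_full (c : Fin (n+1) → ℕ) (hs : ∑ i, c i = n) : Tc n c (n+1) = n := by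
  have h : Tc n c (n+1) = ∑ i : Fin (n+1), Cc n c i.val :=
    (Fin.sum_univ_eq_sum_range (Cc n c) (n+1)).symm
  rw [h]
  calc ∑ i : Fin (n+1), Cc n c i.val = ∑ i : Fin (n+1), c i := by
        refine Finset.sum_congr rfl fun i _ => ?_
        simp [Cc, Nat.mod_eq_of_lt i.isLt]
    _ = n := hs

theorem cycle_unique (c : Fin (n+1) → ℕ) (hs : ∑ i, c i = n) :
    ∃! r : ℕ, r < n+1 ∧ GN n c r := by
  set D : ℕ → ℤ := fun j => (Tc n c j : ℤ) - j with hD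
  have hDper : ∀ j, D (j + (n+1)) = D j - 1 := by
    intro j
    simp only [hD]
    rw [Tc_period, Tc_full c hs]
    push_cast
    ring
  classical
  obtain ⟨b, hb, hbmin⟩ := Finset.exists_min_image (Finset.range (n+1)) D
    ⟨0, Finset.mem_range.mpr n.succ_pos⟩
  have hP : ∃ j, j < n+1 ∧ ∀ t ∈ Finset.range (n+1), D j ≤ D t :=
    ⟨b, Finset.mem_range.mp hb, hbmin⟩
  set r := Nat.find hP with hrdef
  have hrS : r < n+1 ∧ ∀ t ∈ Finset.range (n+1), D r ≤ D t := Nat.find_spec hP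
  have hstrict : ∀ t, t < r → D r < D t := by
    intro t ht
    have htm : t ∈ Finset.range (n+1) := Finset.mem_range.mpr (lt_trans ht hrS.1)
    have hle := hrS.2 t htm
    by_contra h
    have h2 : D t ≤ D r := by omega
    exact Nat.find_min hP ht ⟨Finset.mem_range.mp htm, fun t' ht' => le_trans h2 (hrS.2 t' ht')⟩
  have hGNr : GN n c r := by
    intro j hj
    rcases lt_or_ge (r + j) (n+1) with hlt | hge
    · have h1 := hrS.2 (r+j) (Finset.mem_range.mpr hlt)
      simp only [hD] at h1
      push_cast at h1
      omega
    · set t := r + j - (n+1) with htdef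
      have h1 : t + (n+1) = r + j := by omega
      have h2 : t < r := by omega
      have h3 := hstrict t h2
      have h4 := hDper t
      rw [h1] at h4
      simp only [hD] at h3 h4 ⊢
      push_cast at h3 h4
      omega
  have key : ∀ a b : ℕ, a < b → b < n+1 → GN n c a → GN n c b → False := by
    intro a b hab hbm hga hgb
    have h1 := hga (b - a) (by omega)
    rw [show a + (b - a) = b by omega] at h1
    have h2 := hgb (a + (n+1) - b) (by omega)
    rw [show b + (a + (n+1) - b) = a + (n+1) by omega] at h2
    have h4 := Tc_period c a
    have h5 := Tc_full c hs
    omega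
  refine ⟨r, ⟨hrS.1, hGNr⟩, ?_⟩
  rintro r' ⟨hr'm, hGN'⟩
  rcases lt_trichotomy r' r with h | h | h
  · exact absurd (key r' r h hrS.1 hGN' hGNr) not_false
  · exact h
  · exact absurd (key r r' h hr'm hGNr hGN') not_false

/-- rotation of a circular vector -/
def rot (r : Fin (n+1)) (c : Fin (n+1) → ℕ) : Fin (n+1) → ℕ := fun i => c (i + r)

lemma rot_rot (a b : Fin (n+1)) (c : Fin (n+1) → ℕ) : rot a (rot b c) = rot (a + b) c := by
  funext i
  simp [rot, add_assoc]

lemma rot_zero (c : Fin (n+1) → ℕ) : rot 0 c = c := by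
  funext i
  simp [rot]

lemma vals_rot (r : Fin (n+1)) (c : Fin (n+1) → ℕ) : vals (rot r c) = vals c := by
  have h := congrArg Finset.val (Finset.map_univ_equiv (Equiv.addRight r))
  rw [Finset.map_val] at h
  unfold vals rot
  calc Multiset.map (fun i => c (i + r)) Finset.univ.val
      = Multiset.map c (Multiset.map (⇑(Equiv.addRight r).toEmbedding) Finset.univ.val) := by
        rw [Multiset.map_map]; rfl
    _ = Multiset.map c Finset.univ.val := by rw [h]

lemma sum_rot (r : Fin (n+1)) (c : Fin (n+1) → ℕ) : ∑ i, rot r c i = ∑ i, c i :=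
  Equiv.sum_comp (Equiv.addRight r) c

lemma Cc_rot (r : Fin (n+1)) (c : Fin (n+1) → ℕ) (j : ℕ) :
    Cc n (rot r c) j = Cc n c (j + r.val) := by
  unfold Cc rot
  rw [Fin.add_def]
  congr 1
  simp [Nat.mod_add_mod]

lemma Tc_rot (r : Fin (n+1)) (c : Fin (n+1) → ℕ) (j : ℕ) :
    Tc n c r.val + Tc n (rot r c) j = Tc n c (r.val + j) := by
  induction j with
  | zero => simp [Tc]
  | succ j ih =>
    have h2 := Tc_succ (rot r c) j
    have h3 : Tc n c ((r.val + j) + 1) = Tc n c (r.val + j) + Cc n c (r.val + j) := Tc_succ c _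
    have h4 := Cc_rot r c j
    rw [show j + r.val = r.val + j by omega] at h4
    rw [show r.val + (j+1) = (r.val + j) + 1 by omega, h3, h2, h4]
    omega

lemma goodC_rot (r : Fin (n+1)) (c : Fin (n+1) → ℕ) :
    GoodC n (rot r c) ↔ GN n c r.val := by
  constructor
  · intro h j hj
    have h1 := h j hj
    have h2 := Tc_rot r c j
    omega
  · intro h j hj
    have h1 := h j hj
    have h2 := Tc_rot r c j
    omega

noncomputable def goodShift (n : ℕ) (c : Fin (n+1) → ℕ) : Fin (n+1) :=
  if h : ∑ i, c i = n then
    ⟨(cycle_unique c h).exists.choose, ((cycle_unique c h).exists.choose_spec).1⟩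
  else 0

lemma goodShift_GN (c : Fin (n+1) → ℕ) (h : ∑ i, c i = n) :
    GN n c (goodShift n c).val := by
  rw [goodShift, dif_pos h]
  exact ((cycle_unique c h).exists.choose_spec).2

lemma goodShift_eq (c : Fin (n+1) → ℕ) (h : ∑ i, c i = n) (r : Fin (n+1))
    (hr : GN n c r.val) : r = goodShift n c := by
  obtain ⟨r0, _, huniq⟩ := cycle_unique c h
  have h1 := huniq r.val ⟨r.isLt, hr⟩
  have h2 := huniq (goodShift n c).val ⟨(goodShift n c).isLt, goodShift_GN c h⟩
  exact Fin.val_injective (h1.trans h2.symm)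

lemma goodShift_rot_good (c : Fin (n+1) → ℕ) (h : ∑ i, c i = n) :
    GoodC n (rot (goodShift n c) c) :=
  (goodC_rot _ _).mpr (goodShift_GN c h)

lemma sum_eq_of_vals {M : Multiset ℕ} {c : Fin (n+1) → ℕ} (hc : vals c = M) :
    ∑ i, c i = M.sum := by
  rw [← hc]
  rfl

theorem circ_card (M : Multiset ℕ) (hsum : M.sum = n) :
    (arrangements (n+1) M).card = (n+1) * ((arrangements (n+1) M).filter (GoodC n)).card := by
  classical
  have hmemrot : ∀ (r : Fin (n+1)) (c : Fin (n+1) → ℕ), c ∈ arrangements (n+1) M →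
      rot r c ∈ arrangements (n+1) M := by
    intro r c hc
    rw [arrangements, Finset.mem_filter, Fintype.mem_piFinset] at hc ⊢
    exact ⟨fun i => hc.1 (i + r), by rw [vals_rot]; exact hc.2⟩
  have hsum' : ∀ c ∈ arrangements (n+1) M, ∑ i, c i = n := by
    intro c hc
    rw [arrangements, Finset.mem_filter] at hc
    rw [sum_eq_of_vals hc.2, hsum]
  have hcard : ((Finset.univ : Finset (Fin (n+1))) ×ˢ
      ((arrangements (n+1) M).filter (GoodC n))).card = (arrangements (n+1) M).card := by
    apply Finset.card_nbij' (i := fun rc => rot rc.1 rc.2)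
      (j := fun c => (- goodShift n c, rot (goodShift n c) c))
    · intro a ha
      rw [Finset.mem_coe, Finset.mem_product, Finset.mem_filter] at ha
      exact hmemrot a.1 a.2 ha.2.1
    · intro c hc
      rw [Finset.mem_coe, Finset.mem_product, Finset.mem_filter]
      exact ⟨Finset.mem_univ _, hmemrot _ c hc, goodShift_rot_good c (hsum' c hc)⟩
    · intro a ha
      rw [Finset.mem_coe, Finset.mem_product, Finset.mem_filter] at ha
      obtain ⟨-, hmem, hgood⟩ := ha
      have hsc : ∑ i, rot a.1 a.2 i = n := hsum' _ (hmemrot a.1 a.2 hmem)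
      have hkey : -a.1 = goodShift n (rot a.1 a.2) := by
        apply goodShift_eq _ hsc
        rw [← goodC_rot]
        rw [rot_rot, neg_add_cancel, rot_zero]
        exact hgood
      dsimp only
      rw [← hkey, neg_neg, rot_rot, neg_add_cancel, rot_zero]
    · intro c hc
      dsimp only
      rw [rot_rot, neg_add_cancel, rot_zero]
  rw [← hcard, Finset.card_product, Finset.card_univ, Fintype.card_fin]

end Cycle

section Glue

variable {n : ℕ}

/-- the content vector of a parking function, on the circle `Fin (n+1)` -/
def cvec (n : ℕ) (p : Fin n → ℕ) : Fin (n+1) → ℕ := fun i => content p (i.val + 1)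

/-- the value multiset determined by a content vector -/
def Wm (n : ℕ) (c : Fin (n+1) → ℕ) : Multiset ℕ :=
  (Finset.univ.val : Multiset (Fin (n+1))).bind fun i => Multiset.replicate (c i) (i.val + 1)

/-- valid content vectors -/
def goodAll (n : ℕ) : Finset (Fin (n+1) → ℕ) :=
  (Fintype.piFinset fun _ => Finset.range (n+1)).filter fun c => (∑ i, c i) = n ∧ GoodC n c

/-- a partition of `n`, padded with zeros to a multiset of size `n+1` -/
def Mpad (n : ℕ) (μ : Nat.Partition n) : Multiset ℕ :=
  μ.parts + Multiset.replicate ((n+1) - Multiset.card μ.parts) 0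

/-- the partition associated to a content vector -/
def phi (n : ℕ) (c : Fin (n+1) → ℕ) : Nat.Partition n :=
  if h : ((vals c).filter (0 < ·)).sum = n then
    ⟨(vals c).filter (0 < ·), fun {_} ha => Multiset.of_mem_filter ha, h⟩
  else Nat.Partition.indiscrete n

lemma count_vals {k : ℕ} (p : Fin k → ℕ) (v : ℕ) : (vals p).count v = content p v := by
  rw [vals, Multiset.count_map, content]
  have h : (Finset.univ.filter fun j => p j = v) = (Finset.univ.filter fun j => v = p j) :=
    Finset.filter_congr fun x _ => by exact eq_comm
  rw [h]
  rfl

lemma sum_univ_eq_vals_sum {k : ℕ} (c : Fin k → ℕ) : ∑ i, c i = (vals c).sum := rfl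

lemma vals_card {k : ℕ} (c : Fin k → ℕ) : Multiset.card (vals c) = k := by
  rw [vals, Multiset.card_map]
  exact Finset.card_univ.trans (Fintype.card_fin k)

lemma prod_vals {k : ℕ} {M : Type*} [CommMonoid M] (c : Fin k → ℕ) (g : ℕ → M) :
    ∏ i, g (c i) = ((vals c).map g).prod := by
  rw [vals, Multiset.map_map]
  rfl

lemma Wm_count_eq (c : Fin (n+1) → ℕ) (i : Fin (n+1)) :
    (Wm n c).count (i.val + 1) = c i := by
  rw [Wm, Multiset.count_bind]
  have h : (Multiset.map (fun j => Multiset.count (i.val+1)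
      (Multiset.replicate (c j) (j.val+1))) Finset.univ.val).sum =
      ∑ j : Fin (n+1), if j = i then c j else 0 := by
    refine Finset.sum_congr rfl fun j _ => ?_
    rw [Multiset.count_replicate]
    congr 1
    simp only [eq_iff_iff]
    rw [Fin.ext_iff]
    omega
  rw [h, Finset.sum_ite_eq' Finset.univ i (fun j => c j), if_pos (Finset.mem_univ i)]

lemma Wm_count_zero (c : Fin (n+1) → ℕ) (v : ℕ) (hv : ∀ i : Fin (n+1), v ≠ i.val + 1) :
    (Wm n c).count v = 0 := by
  rw [Wm, Multiset.count_bind]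
  have h : (Multiset.map (fun j => Multiset.count v
      (Multiset.replicate (c j) (j.val+1))) Finset.univ.val).sum =
      ∑ _j : Fin (n+1), (0 : ℕ) := by
    refine Finset.sum_congr rfl fun j _ => ?_
    rw [Multiset.count_replicate, if_neg (fun h => hv j h.symm)]
  rw [h, Finset.sum_const, smul_zero]

lemma Wm_card (c : Fin (n+1) → ℕ) : Multiset.card (Wm n c) = ∑ i, c i := by
  rw [Wm, Multiset.card_bind]
  refine Finset.sum_congr rfl fun j _ => ?_
  simp

lemma Wm_prod_count (c : Fin (n+1) → ℕ) :
    ∏ v ∈ (Wm n c).toFinset, ((Wm n c).count v).factorial =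
      ∏ i : Fin (n+1), (c i).factorial := by
  have h1 : ∏ v ∈ (Wm n c).toFinset, ((Wm n c).count v).factorial =
      ∏ i ∈ Finset.univ.filter (fun i : Fin (n+1) => 0 < c i), (c i).factorial := by
    symm
    refine Finset.prod_nbij (fun i => i.val + 1) ?_ ?_ ?_ ?_
    · intro i hi
      rw [Finset.mem_filter] at hi
      rw [Multiset.mem_toFinset, ← Multiset.count_pos, Wm_count_eq]
      exact hi.2
    · intro i _ j _ h
      have h' : i.val + 1 = j.val + 1 := h
      exact Fin.ext (by omega)
    · intro v hv
      rw [Finset.mem_coe, Multiset.mem_toFinset, ← Multiset.count_pos] at hv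
      by_cases hcase : ∃ i : Fin (n+1), v = i.val + 1
      · obtain ⟨i, hi⟩ := hcase
        refine ⟨i, ?_, hi.symm⟩
        rw [Finset.mem_coe, Finset.mem_filter]
        refine ⟨Finset.mem_univ i, ?_⟩
        rw [hi, Wm_count_eq] at hv
        exact hv
      · push_neg at hcase
        rw [Wm_count_zero c v hcase] at hv
        omega
    · intro i _
      rw [Wm_count_eq]
  rw [h1]
  refine Finset.prod_subset (Finset.subset_univ _) ?_
  intro i _ hi
  rw [Finset.mem_filter] at hi
  have hc : c i = 0 := by
    by_contra h
    exact hi ⟨Finset.mem_univ i, by omega⟩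
  rw [hc]
  rfl

lemma vals_eq_Wm {p : Fin n → ℕ} (hp : ∀ j, p j ∈ Finset.Icc 1 n) :
    vals p = Wm n (cvec n p) := by
  ext v
  by_cases hcase : ∃ i : Fin (n+1), v = i.val + 1
  · obtain ⟨i, hi⟩ := hcase
    rw [hi, Wm_count_eq, count_vals]
    rfl
  · push_neg at hcase
    rw [Wm_count_zero _ v hcase, count_vals]
    rw [content, Finset.card_eq_zero, Finset.filter_eq_empty_iff]
    intro j _
    have h1 := hp j
    rw [Finset.mem_Icc] at h1
    intro hj
    have hveq : v = (p j - 1) + 1 := by omega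
    exact hcase ⟨p j - 1, by omega⟩ (by simpa using hveq)

lemma Icc_sum_range {M : Type*} [AddCommMonoid M] (g : ℕ → M) (t : ℕ) :
    ∑ v ∈ Finset.Icc 1 t, g v = ∑ i ∈ Finset.range t, g (i+1) := by
  rw [← Finset.Ico_add_one_right_eq_Icc, Finset.sum_Ico_eq_sum_range]
  refine Finset.sum_congr (by norm_num) fun i _ => by rw [add_comm]

lemma Icc_prod_range {M : Type*} [CommMonoid M] (g : ℕ → M) (t : ℕ) :
    ∏ v ∈ Finset.Icc 1 t, g v = ∏ i ∈ Finset.range t, g (i+1) := by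
  rw [← Finset.Ico_add_one_right_eq_Icc, Finset.prod_Ico_eq_prod_range]
  refine Finset.prod_congr (by norm_num) fun i _ => by rw [add_comm]

lemma card_le_filter_content {p : Fin n → ℕ} (hp : ∀ j, 1 ≤ p j) (t : ℕ) :
    (Finset.univ.filter fun idx => p idx ≤ t).card = ∑ i ∈ Finset.range t, content p (i+1) := by
  have h1 : (Finset.univ.filter fun idx => p idx ≤ t).card =
      ∑ v ∈ Finset.Icc 1 t, ((Finset.univ.filter fun idx => p idx ≤ t).filter
        (fun idx => p idx = v)).card := by
    apply Finset.card_eq_sum_card_fiberwise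
    intro idx hidx
    rw [Finset.mem_coe, Finset.mem_filter] at hidx
    rw [Finset.mem_coe, Finset.mem_Icc]
    exact ⟨hp idx, hidx.2⟩
  rw [h1, ← Icc_sum_range (fun v => content p v) t]
  refine Finset.sum_congr rfl fun v hv => ?_
  rw [Finset.mem_Icc] at hv
  rw [content, Finset.filter_filter]
  congr 1
  apply Finset.filter_congr
  intro x _
  constructor
  · exact fun h => h.2
  · exact fun h => ⟨by omega, h⟩

lemma Tc_eq_content_sum (p : Fin n → ℕ) (t : ℕ) (ht : t ≤ n+1) :
    Tc n (cvec n p) t = ∑ i ∈ Finset.range t, content p (i+1) := by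
  unfold Tc
  refine Finset.sum_congr rfl fun i hi => ?_
  rw [Finset.mem_range] at hi
  show content p (i % (n+1) + 1) = content p (i+1)
  rw [Nat.mod_eq_of_lt (by omega)]

lemma content_le (p : Fin n → ℕ) (v : ℕ) : content p v ≤ n := by
  rw [content]
  calc (Finset.univ.filter fun j => p j = v).card ≤ Finset.univ.card :=
        Finset.card_filter_le _ _
    _ = n := by rw [Finset.card_univ, Fintype.card_fin]

lemma park_mem_goodAll {p : Fin n → ℕ} (hp : p ∈ parkFinset n) : cvec n p ∈ goodAll n := by
  rw [parkFinset, Finset.mem_filter, Fintype.mem_piFinset] at hp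
  obtain ⟨hmem, hpark⟩ := hp
  have hp1 : ∀ j, 1 ≤ p j := fun j => (Finset.mem_Icc.mp (hmem j)).1
  have hsum : ∑ i : Fin (n+1), cvec n p i = n := by
    have h1 : (Finset.univ : Finset (Fin n)).card =
        ∑ v ∈ Finset.Icc 1 (n+1), (Finset.univ.filter fun j => p j = v).card := by
      apply Finset.card_eq_sum_card_fiberwise
      intro j _
      have := Finset.mem_Icc.mp (hmem j)
      rw [Finset.mem_coe, Finset.mem_Icc]
      omega
    calc ∑ i : Fin (n+1), cvec n p i
        = ∑ i ∈ Finset.range (n+1), content p (i+1) :=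
          Fin.sum_univ_eq_sum_range (fun i => content p (i+1)) (n+1)
      _ = ∑ v ∈ Finset.Icc 1 (n+1), content p v := (Icc_sum_range (fun v => content p v) _).symm
      _ = (Finset.univ : Finset (Fin n)).card := h1.symm
      _ = n := by rw [Finset.card_univ, Fintype.card_fin]
  have hgood : GoodC n (cvec n p) := by
    intro t ht
    rcases Nat.eq_zero_or_pos t with h0 | h0
    · omega
    · rw [Tc_eq_content_sum p t (by omega), ← card_le_filter_content hp1 t]
      exact hpark t (Finset.mem_Icc.mpr ⟨h0, ht⟩)
  rw [goodAll, Finset.mem_filter, Fintype.mem_piFinset]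
  refine ⟨fun i => Finset.mem_range.mpr ?_, hsum, hgood⟩
  have := content_le p (i.val + 1)
  show content p (i.val + 1) < n + 1
  omega

lemma goodAll_last {c : Fin (n+1) → ℕ} (hc : c ∈ goodAll n) : c ⟨n, n.lt_succ_self⟩ = 0 := by
  rw [goodAll, Finset.mem_filter] at hc
  obtain ⟨-, hsum, hgood⟩ := hc
  have h1 : Tc n c (n+1) = n := Tc_full c hsum
  have h2 : n ≤ Tc n c n := hgood n le_rfl
  have h3 : Tc n c (n+1) = Tc n c n + Cc n c n := Tc_succ c n
  have hmod : n % (n+1) = n := Nat.mod_eq_of_lt n.lt_succ_self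
  have h4 : Cc n c n = c ⟨n, n.lt_succ_self⟩ := by
    rw [Cc]
    congr 1
    exact Fin.ext hmod
  omega

lemma mem_Wm_bounds {c : Fin (n+1) → ℕ} (hc : c ∈ goodAll n) {v : ℕ} (hv : v ∈ Wm n c) :
    v ∈ Finset.Icc 1 n := by
  rw [Wm, Multiset.mem_bind] at hv
  obtain ⟨i, -, hvi⟩ := hv
  have hne : c i ≠ 0 := by
    intro h0
    rw [h0] at hvi
    exact absurd hvi (by simp)
  have hi : i.val < n := by
    by_contra h
    apply hne
    have hvn : i.val = n := by have := i.isLt; omega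
    have hieq : i = ⟨n, n.lt_succ_self⟩ := Fin.ext (by simp [hvn])
    rw [hieq]
    exact goodAll_last hc
  rw [Multiset.eq_of_mem_replicate hvi, Finset.mem_Icc]
  omega

lemma fiber_eq {c : Fin (n+1) → ℕ} (hc : c ∈ goodAll n) :
    (parkFinset n).filter (fun p => cvec n p = c) = arrangements n (Wm n c) := by
  have hcgood : GoodC n c := ((Finset.mem_filter.mp hc).2).2
  ext p
  rw [Finset.mem_filter, arrangements, Finset.mem_filter, Fintype.mem_piFinset,
    parkFinset, Finset.mem_filter, Fintype.mem_piFinset]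
  constructor
  · rintro ⟨⟨hmem, _⟩, hcv⟩
    have hv : vals p = Wm n c := by rw [← hcv]; exact vals_eq_Wm hmem
    refine ⟨fun j => ?_, hv⟩
    rw [Multiset.mem_toFinset, ← hv]
    exact Multiset.mem_map_of_mem _ (Finset.mem_val.mpr (Finset.mem_univ j))
  · rintro ⟨_, hv⟩
    have hpj : ∀ j, p j ∈ Finset.Icc 1 n := by
      intro j
      apply mem_Wm_bounds hc
      rw [← hv]
      exact Multiset.mem_map_of_mem _ (Finset.mem_val.mpr (Finset.mem_univ j))
    have hp1 : ∀ j, 1 ≤ p j := fun j => (Finset.mem_Icc.mp (hpj j)).1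
    have hcveq : cvec n p = c := by
      funext i
      show content p (i.val + 1) = c i
      rw [← count_vals, hv, Wm_count_eq]
    refine ⟨⟨hpj, ?_⟩, hcveq⟩
    intro t htmem
    rw [Finset.mem_Icc] at htmem
    rw [card_le_filter_content hp1 t]
    have h1 : Tc n c t = ∑ i ∈ Finset.range t, content p (i+1) := by
      rw [← hcveq]
      exact Tc_eq_content_sum p t (by omega)
    rw [← h1]
    exact hcgood t htmem.2

lemma fiber_card {c : Fin (n+1) → ℕ} (hc : c ∈ goodAll n) :
    ((parkFinset n).filter (fun p => cvec n p = c)).card * ∏ i, (c i).factorial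
      = n.factorial := by
  have hsum : ∑ i, c i = n := ((Finset.mem_filter.mp hc).2).1
  have h1 := core_count n (Wm n c) (by rw [Wm_card, hsum])
  rw [Wm_prod_count] at h1
  rw [fiber_eq hc]
  exact h1

lemma step1 (N : ℕ) :
    ∑ p ∈ parkFinset n, ∏ i ∈ Finset.Icc 1 n,
        ((content p i).factorial : ℚ) • MvPolynomial.hsymm (Fin N) ℚ (content p i) =
    ∑ c ∈ goodAll n, (n.factorial : ℚ) •
        ∏ i : Fin (n+1), MvPolynomial.hsymm (Fin N) ℚ (c i) := by
  rw [← Finset.sum_fiberwise_of_maps_to (fun p hp => park_mem_goodAll hp)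
    (fun p => ∏ i ∈ Finset.Icc 1 n,
      ((content p i).factorial : ℚ) • MvPolynomial.hsymm (Fin N) ℚ (content p i))]
  refine Finset.sum_congr rfl fun c hc => ?_
  have hinner : ∀ p ∈ (parkFinset n).filter (fun p => cvec n p = c),
      ∏ i ∈ Finset.Icc 1 n,
        ((content p i).factorial : ℚ) • MvPolynomial.hsymm (Fin N) ℚ (content p i)
      = ((∏ i : Fin (n+1), (c i).factorial : ℕ) : ℚ) •
          ∏ i : Fin (n+1), MvPolynomial.hsymm (Fin N) ℚ (c i) := by
    intro p hp
    rw [Finset.mem_filter] at hp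
    obtain ⟨_, hcv⟩ := hp
    have hlast : c ⟨n, n.lt_succ_self⟩ = 0 := goodAll_last hc
    have hcont : ∀ i : Fin (n+1), content p (i.val+1) = c i := fun i => by rw [← hcv]; rfl
    calc ∏ i ∈ Finset.Icc 1 n,
          ((content p i).factorial : ℚ) • MvPolynomial.hsymm (Fin N) ℚ (content p i)
        = ∏ i ∈ Finset.range n,
            ((content p (i+1)).factorial : ℚ) • MvPolynomial.hsymm (Fin N) ℚ (content p (i+1)) :=
          Icc_prod_range _ n
      _ = ∏ i ∈ Finset.range (n+1),
            ((content p (i+1)).factorial : ℚ) • MvPolynomial.hsymm (Fin N) ℚ (content p (i+1)) := by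
          rw [Finset.prod_range_succ]
          have h0 : content p (n+1) = 0 := by
            have := hcont ⟨n, n.lt_succ_self⟩
            simpa [hlast] using this
          rw [h0, MvPolynomial.hsymm_zero]
          norm_num
      _ = ∏ i : Fin (n+1),
            ((content p (i.val+1)).factorial : ℚ) • MvPolynomial.hsymm (Fin N) ℚ (content p (i.val+1)) :=
          (Fin.prod_univ_eq_prod_range
            (fun i => ((content p (i+1)).factorial : ℚ) • MvPolynomial.hsymm (Fin N) ℚ (content p (i+1)))
            (n+1)).symm
      _ = ∏ i : Fin (n+1), ((c i).factorial : ℚ) • MvPolynomial.hsymm (Fin N) ℚ (c i) :=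
          Finset.prod_congr rfl fun i _ => by rw [hcont i]
      _ = _ := by
          simp_rw [MvPolynomial.smul_eq_C_mul]
          rw [Finset.prod_mul_distrib, ← map_prod, Nat.cast_prod]
  rw [Finset.sum_congr rfl hinner, Finset.sum_const, ← Nat.cast_smul_eq_nsmul ℚ, smul_smul,
    ← Nat.cast_mul, fiber_card hc]

lemma good_count (M : Multiset ℕ) (hcard : Multiset.card M = n+1) (hsum : M.sum = n) :
    ((arrangements (n+1) M).filter (GoodC n)).card * ∏ v ∈ M.toFinset, (M.count v).factorial
      = n.factorial := by
  have h1 := core_count (n+1) M hcard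
  rw [circ_card M hsum, mul_assoc, Nat.factorial_succ] at h1
  exact Nat.eq_of_mul_eq_mul_left n.succ_pos h1

lemma card_le_sum_multiset (s : Multiset ℕ) (h : ∀ x ∈ s, 1 ≤ x) :
    Multiset.card s ≤ s.sum := by
  induction s using Multiset.induction with
  | empty => simp
  | cons a s ihh =>
    rw [Multiset.card_cons, Multiset.sum_cons]
    have h1 := h a (Multiset.mem_cons_self a s)
    have h2 := ihh (fun x hx => h x (Multiset.mem_cons_of_mem hx))
    omega

lemma parts_card_le (μ : Nat.Partition n) : Multiset.card μ.parts ≤ n := by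
  have := card_le_sum_multiset μ.parts (fun x hx => μ.parts_pos hx)
  rw [μ.parts_sum] at this
  exact this

lemma parts_card_pos (μ : Nat.Partition n) (hn : 1 ≤ n) : 1 ≤ Multiset.card μ.parts := by
  by_contra h
  have h0 : μ.parts = 0 := Multiset.card_eq_zero.mp (by omega)
  have h2 := μ.parts_sum
  rw [h0] at h2
  simp at h2
  omega

lemma Mpad_card (μ : Nat.Partition n) : Multiset.card (Mpad n μ) = n+1 := by
  rw [Mpad, Multiset.card_add, Multiset.card_replicate]
  have := parts_card_le μ
  omega

lemma Mpad_sum (μ : Nat.Partition n) : (Mpad n μ).sum = n := by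
  rw [Mpad, Multiset.sum_add, Multiset.sum_replicate, smul_zero, add_zero, μ.parts_sum]

lemma zero_not_mem_parts (μ : Nat.Partition n) : 0 ∉ μ.parts :=
  fun h => absurd (μ.parts_pos h) (lt_irrefl 0)

lemma Mpad_toFinset (μ : Nat.Partition n) :
    (Mpad n μ).toFinset = insert 0 μ.parts.toFinset := by
  have h1 : (n+1) - Multiset.card μ.parts ≠ 0 := by
    have := parts_card_le μ
    omega
  ext v
  rw [Multiset.mem_toFinset, Mpad, Multiset.mem_add, Finset.mem_insert, Multiset.mem_toFinset,
    Multiset.mem_replicate]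
  constructor
  · rintro (h | h)
    · exact Or.inr h
    · exact Or.inl h.2
  · rintro (h | h)
    · exact Or.inr ⟨h1, h⟩
    · exact Or.inl h

lemma Mpad_prod_count (μ : Nat.Partition n) :
    ∏ v ∈ (Mpad n μ).toFinset, ((Mpad n μ).count v).factorial =
      multFact μ.parts * ((n+1) - Multiset.card μ.parts).factorial := by
  rw [Mpad_toFinset μ,
    Finset.prod_insert (fun h => zero_not_mem_parts μ (Multiset.mem_toFinset.mp h))]
  have hc0 : (Mpad n μ).count 0 = (n+1) - Multiset.card μ.parts := by
    rw [Mpad, Multiset.count_add, Multiset.count_replicate, if_pos rfl,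
      Multiset.count_eq_zero_of_notMem (zero_not_mem_parts μ), zero_add]
  have hcv : ∀ v ∈ μ.parts.toFinset, (Mpad n μ).count v = μ.parts.count v := by
    intro v hv
    have hvpos : v ≠ 0 := fun h => zero_not_mem_parts μ (h ▸ Multiset.mem_toFinset.mp hv)
    rw [Mpad, Multiset.count_add, Multiset.count_replicate, if_neg (fun h => hvpos h.symm),
      add_zero]
  rw [hc0, multFact, mul_comm]
  congr 1
  exact Finset.prod_congr rfl fun v hv => by rw [hcv v hv]

lemma filter_pos_sum (s : Multiset ℕ) : (s.filter (0 < ·)).sum = s.sum := by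
  conv_rhs => rw [← Multiset.filter_add_not (fun a => 0 < a) s]
  rw [Multiset.sum_add]
  have h : (s.filter (fun a => ¬ 0 < a)).sum = 0 := by
    apply Multiset.sum_eq_zero
    intro x hx
    have := Multiset.of_mem_filter hx
    omega
  rw [h, add_zero]

lemma pos_filter_decomp (s : Multiset ℕ) :
    s.filter (0 < ·) +
      Multiset.replicate (Multiset.card s - Multiset.card (s.filter (0 < ·))) 0 = s := by
  have h1 := Multiset.filter_add_not (fun a => 0 < a) s
  have h3 : s.filter (fun a => ¬ 0 < a) = s.filter (fun a => a = 0) :=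
    Multiset.filter_congr (fun x _ => by omega)
  have h2 : s.filter (fun a => ¬ 0 < a) =
      Multiset.replicate (Multiset.card s - Multiset.card (s.filter (0 < ·))) 0 := by
    rw [h3, Multiset.filter_eq']
    congr 1
    have h4 := congrArg Multiset.card h1
    rw [Multiset.card_add] at h4
    have h5 : Multiset.card (s.filter fun a => ¬ 0 < a) = Multiset.count 0 s := by
      rw [h3, Multiset.filter_eq', Multiset.card_replicate]
    omega
  rw [← h2]
  exact h1

lemma goodAll_filter_phi (μ : Nat.Partition n) :
    (goodAll n).filter (fun c => phi n c = μ) =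
      (arrangements (n+1) (Mpad n μ)).filter (GoodC n) := by
  ext c
  rw [Finset.mem_filter, Finset.mem_filter, goodAll, Finset.mem_filter, Fintype.mem_piFinset,
    arrangements, Finset.mem_filter, Fintype.mem_piFinset]
  constructor
  · rintro ⟨⟨_, hsum, hgood⟩, hphi⟩
    have hvsum : ((vals c).filter (0 < ·)).sum = n := by
      rw [filter_pos_sum, ← sum_univ_eq_vals_sum, hsum]
    rw [phi, dif_pos hvsum] at hphi
    have hparts : μ.parts = (vals c).filter (0 < ·) := by rw [← hphi]
    have hvals : vals c = Mpad n μ := by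
      rw [Mpad, hparts]
      have hdec := pos_filter_decomp (vals c)
      rw [vals_card] at hdec
      exact hdec.symm
    refine ⟨⟨fun i => ?_, hvals⟩, hgood⟩
    rw [Multiset.mem_toFinset, ← hvals]
    exact Multiset.mem_map_of_mem _ (Finset.mem_val.mpr (Finset.mem_univ i))
  · rintro ⟨⟨_, hvals⟩, hgood⟩
    have hsum : ∑ i, c i = n := by rw [sum_univ_eq_vals_sum, hvals, Mpad_sum]
    have hparts : (vals c).filter (0 < ·) = μ.parts := by
      rw [hvals, Mpad, Multiset.filter_add]
      have h1 : μ.parts.filter (0 < ·) = μ.parts :=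
        Multiset.filter_eq_self.mpr (fun a ha => μ.parts_pos ha)
      have h2 : (Multiset.replicate ((n+1) - Multiset.card μ.parts) 0).filter (0 < ·) = 0 := by
        rw [Multiset.filter_eq_nil]
        intro a ha
        rw [Multiset.eq_of_mem_replicate ha]
        omega
      rw [h1, h2, add_zero]
    refine ⟨⟨?_, hsum, hgood⟩, ?_⟩
    · intro i
      rw [Finset.mem_range]
      have hci : c i ∈ vals c :=
        Multiset.mem_map_of_mem _ (Finset.mem_val.mpr (Finset.mem_univ i))
      rw [hvals, Mpad, Multiset.mem_add] at hci
      rcases hci with h | h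
      · have h2 := Multiset.single_le_sum (fun x _ => Nat.zero_le x) _ h
        rw [μ.parts_sum] at h2
        omega
      · rw [Multiset.eq_of_mem_replicate h]
        omega
    · rw [phi, dif_pos (by rw [hparts, μ.parts_sum])]
      exact Nat.Partition.ext hparts

lemma multFact_pos (s : Multiset ℕ) : 0 < multFact s :=
  Finset.prod_pos (fun i _ => Nat.factorial_pos _)

lemma good_coeff (μ : Nat.Partition n) (hn : 1 ≤ n) :
    ((((arrangements (n+1) (Mpad n μ)).filter (GoodC n)).card : ℚ)) =
      (n.descFactorial (Multiset.card μ.parts - 1) : ℚ) / (multFact μ.parts : ℚ) := by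
  have hl1 : 1 ≤ Multiset.card μ.parts := parts_card_pos μ hn
  have hln : Multiset.card μ.parts ≤ n := parts_card_le μ
  have h1 := good_count (Mpad n μ) (Mpad_card μ) (Mpad_sum μ)
  rw [Mpad_prod_count μ] at h1
  have h2 := Nat.factorial_mul_descFactorial (show Multiset.card μ.parts - 1 ≤ n by omega)
  have h3 : n - (Multiset.card μ.parts - 1) = (n+1) - Multiset.card μ.parts := by omega
  have h4 : ((arrangements (n+1) (Mpad n μ)).filter (GoodC n)).card * multFact μ.parts
      = n.descFactorial (Multiset.card μ.parts - 1) := by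
    apply Nat.eq_of_mul_eq_mul_right (Nat.factorial_pos ((n+1) - Multiset.card μ.parts))
    calc ((arrangements (n+1) (Mpad n μ)).filter (GoodC n)).card * multFact μ.parts *
          ((n+1) - Multiset.card μ.parts).factorial
        = ((arrangements (n+1) (Mpad n μ)).filter (GoodC n)).card *
            (multFact μ.parts * ((n+1) - Multiset.card μ.parts).factorial) := by ring
      _ = n.factorial := h1
      _ = ((n+1) - Multiset.card μ.parts).factorial *
            n.descFactorial (Multiset.card μ.parts - 1) := by rw [← h2, h3]
      _ = n.descFactorial (Multiset.card μ.parts - 1) *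
            ((n+1) - Multiset.card μ.parts).factorial := by ring
  rw [eq_div_iff (show (multFact μ.parts : ℚ) ≠ 0 by exact_mod_cast (multFact_pos μ.parts).ne')]
  exact_mod_cast h4

end Glue

/-- In `ℚ[x_1,…,x_N]`, the volume polynomial evaluated at umbrae `θ̄_i` with moments
`θ̄^i ≃ i!·h_i` gives the parking function symmetric function:
`Σ_{p ∈ park(n)} Π_{i=1}^n c_i(p)!·h_{c_i(p)} = n!·Σ_{μ ⊢ n} ((n)_{ℓ(μ)-1}/m(μ)!)·h_μ`. -/
theorem volume_at_theta_eq_PF (N : ℕ) (hN : 1 ≤ N) (n : ℕ) (hn : 1 ≤ n) :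
    ∑ p ∈ parkFinset n, ∏ i ∈ Finset.Icc 1 n,
        ((content p i).factorial : ℚ) • MvPolynomial.hsymm (Fin N) ℚ (content p i) =
      (n.factorial : ℚ) • ∑ μ : Nat.Partition n,
        ((n.descFactorial (μ.parts.card - 1) : ℚ) / (multFact μ.parts : ℚ)) •
          (μ.parts.map (MvPolynomial.hsymm (Fin N) ℚ)).prod := by
  rw [step1 N, Finset.smul_sum,
    ← Finset.sum_fiberwise_of_maps_to (fun c _ => Finset.mem_univ (phi n c))
      (fun c => (n.factorial : ℚ) • ∏ i : Fin (n+1), MvPolynomial.hsymm (Fin N) ℚ (c i))]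
  refine Finset.sum_congr rfl fun μ _ => ?_
  rw [goodAll_filter_phi μ]
  have hterm : ∀ c ∈ (arrangements (n+1) (Mpad n μ)).filter (GoodC n),
      (n.factorial : ℚ) • ∏ i : Fin (n+1), MvPolynomial.hsymm (Fin N) ℚ (c i) =
      (n.factorial : ℚ) • (μ.parts.map (MvPolynomial.hsymm (Fin N) ℚ)).prod := by
    intro c hcc
    rw [Finset.mem_filter, arrangements, Finset.mem_filter] at hcc
    have hvals : vals c = Mpad n μ := hcc.1.2
    congr 1
    rw [prod_vals c, hvals, Mpad, Multiset.map_add, Multiset.prod_add, Multiset.map_replicate,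
      MvPolynomial.hsymm_zero, Multiset.prod_replicate, one_pow, mul_one]
  rw [Finset.sum_congr rfl hterm, Finset.sum_const, ← Nat.cast_smul_eq_nsmul ℚ, smul_smul,
    good_coeff μ hn, smul_smul]
  congr 1
  ring
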